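/- The fixed-point rule RSP* is sound for bisimilarity: if ¬f↓ and the process interpretations of e and f·e+g are bisimilar, then the process interpretations of e and f*·g are bisimilar. -/
import Mathlib


namespace RegEx

/-- Star expressions over an action alphabet `A`. -/
inductive StExp (A : Type) : Type
  | zero : StExp A
  | one : StExp A
  | act : A → StExp A
  | add : StExp A → StExp A → StExp A
  | mul : StExp A → StExp A → StExp A
  | star : StExp A → StExp A
  deriving DecidableEq

instance {A : Type} : Zero (StExp A) := ⟨StExp.zero⟩
instance {A : Type} : One (StExp A) := ⟨StExp.one⟩
instance {A : Type} : Add (StExp A) := ⟨StExp.add⟩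
instance {A : Type} : Mul (StExp A) := ⟨StExp.mul⟩

/-- Immediate termination `e↓`. -/
inductive Term {A : Type} : StExp A → Prop
  | one : Term 1
  | addL {e f : StExp A} : Term e → Term (e + f)
  | addR {e f : StExp A} : Term f → Term (e + f)
  | mul {e f : StExp A} : Term e → Term f → Term (e * f)
  | star (e : StExp A) : Term e.star

/-- The SOS transition relation `e —a→ e'`. -/
inductive Step {A : Type} : StExp A → A → StExp A → Prop
  | act (a : A) : Step (StExp.act a) a 1
  | addL {e1 e2 : StExp A} {a : A} {e' : StExp A} : Step e1 a e' → Step (e1 + e2) a e'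
  | addR {e1 e2 : StExp A} {a : A} {e' : StExp A} : Step e2 a e' → Step (e1 + e2) a e'
  | mulL {e1 e2 : StExp A} {a : A} {e1' : StExp A} :
      Step e1 a e1' → Step (e1 * e2) a (e1' * e2)
  | mulR {e1 e2 : StExp A} {a : A} {e2' : StExp A} :
      Term e1 → Step e2 a e2' → Step (e1 * e2) a e2'
  | star {e : StExp A} {a : A} {e' : StExp A} :
      Step e a e' → Step e.star a (e' * e.star)

/-- Boolean immediate-termination test. -/
def termB {A : Type} : StExp A → Bool
  | .zero => false
  | .one => true
  | .act _ => false
  | .add e f => termB e || termB f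
  | .mul e f => termB e && termB f
  | .star _ => true

/-- Star height. -/
def sh {A : Type} : StExp A → ℕ
  | .zero => 0
  | .one => 0
  | .act _ => 0
  | .add e f => max (sh e) (sh f)
  | .mul e f => max (sh e) (sh f)
  | .star e => sh e + 1

/-- The axioms of Milner's purely equational system `Mil⁻`. -/
inductive MilAx {A : Type} : StExp A → StExp A → Prop
  | assocAdd (e f g : StExp A) : MilAx ((e + f) + g) (e + (f + g))
  | addZero (e : StExp A) : MilAx (e + 0) e
  | commAdd (e f : StExp A) : MilAx (e + f) (f + e)
  | idemAdd (e : StExp A) : MilAx (e + e) e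
  | assocMul (e f g : StExp A) : MilAx ((e * f) * g) (e * (f * g))
  | rdistr (e f g : StExp A) : MilAx ((e + f) * g) (e * g + f * g)
  | oneMul (e : StExp A) : MilAx (1 * e) e
  | mulOne (e : StExp A) : MilAx (e * 1) e
  | zeroMul (e : StExp A) : MilAx (0 * e) 0
  | recStar (e : StExp A) : MilAx e.star (1 + e * e.star)
  | trmBody (e : StExp A) : MilAx e.star (1 + e).star

/-- The ACI axioms for `+`. -/
inductive ACIAx {A : Type} : StExp A → StExp A → Prop
  | assoc (e f g : StExp A) : ACIAx ((e + f) + g) (e + (f + g))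
  | comm (e f : StExp A) : ACIAx (e + f) (f + e)
  | idem (e : StExp A) : ACIAx (e + e) e

/-- Equational-logic derivability from a set of axioms `ax`. -/
inductive EqDeriv {A : Type} (ax : StExp A → StExp A → Prop) : StExp A → StExp A → Prop
  | ax {e f : StExp A} : ax e f → EqDeriv ax e f
  | refl (e : StExp A) : EqDeriv ax e e
  | symm {e f : StExp A} : EqDeriv ax e f → EqDeriv ax f e
  | trans {e f g : StExp A} : EqDeriv ax e f → EqDeriv ax f g → EqDeriv ax e g
  | addCongr {e1 f1 e2 f2 : StExp A} :
      EqDeriv ax e1 f1 → EqDeriv ax e2 f2 → EqDeriv ax (e1 + e2) (f1 + f2)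
  | mulCongr {e1 f1 e2 f2 : StExp A} :
      EqDeriv ax e1 f1 → EqDeriv ax e2 f2 → EqDeriv ax (e1 * e2) (f1 * f2)
  | starCongr {e f : StExp A} : EqDeriv ax e f → EqDeriv ax e.star f.star

/-- Derivability in `Mil⁻`. -/
def MilMinus {A : Type} : StExp A → StExp A → Prop := EqDeriv MilAx

/-- Milner's system `Mil = Mil⁻ + RSP*`. -/
inductive Mil {A : Type} : StExp A → StExp A → Prop
  | ax {e f : StExp A} : MilAx e f → Mil e f
  | refl (e : StExp A) : Mil e e
  | symm {e f : StExp A} : Mil e f → Mil f e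
  | trans {e f g : StExp A} : Mil e f → Mil f g → Mil e g
  | addCongr {e1 f1 e2 f2 : StExp A} : Mil e1 f1 → Mil e2 f2 → Mil (e1 + e2) (f1 + f2)
  | mulCongr {e1 f1 e2 f2 : StExp A} : Mil e1 f1 → Mil e2 f2 → Mil (e1 * e2) (f1 * f2)
  | starCongr {e f : StExp A} : Mil e f → Mil e.star f.star
  | rsp {e f g : StExp A} : Mil e (f * e + g) → ¬ Term f → Mil e (f.star * g)

/-- The variant system `Mil' = Mil⁻ + USP*`. -/
inductive Mil' {A : Type} : StExp A → StExp A → Prop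
  | ax {e f : StExp A} : MilAx e f → Mil' e f
  | refl (e : StExp A) : Mil' e e
  | symm {e f : StExp A} : Mil' e f → Mil' f e
  | trans {e f g : StExp A} : Mil' e f → Mil' f g → Mil' e g
  | addCongr {e1 f1 e2 f2 : StExp A} : Mil' e1 f1 → Mil' e2 f2 → Mil' (e1 + e2) (f1 + f2)
  | mulCongr {e1 f1 e2 f2 : StExp A} : Mil' e1 f1 → Mil' e2 f2 → Mil' (e1 * e2) (f1 * f2)
  | starCongr {e f : StExp A} : Mil' e f → Mil' e.star f.star
  | usp {e1 e2 f g : StExp A} :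
      Mil' e1 (f * e1 + g) → Mil' e2 (f * e2 + g) → ¬ Term f → Mil' e1 e2

/-- Sum of a list of star expressions (empty sum is `0`). -/
def listSum {A : Type} : List (StExp A) → StExp A
  | [] => 0
  | e :: l => listSum l + e

/-- Star expression denoted by a transition label in `A ∪ {1}`. -/
def lab {A : Type} : Option A → StExp A
  | none => 1
  | some a => StExp.act a

/-- Antimirov's partial derivatives. -/
def pderiv {A : Type} [DecidableEq A] (a : A) : StExp A → Finset (StExp A)
  | .zero => ∅
  | .one => ∅
  | .act b => if b = a then {1} else ∅
  | .add e1 e2 => pderiv a e1 ∪ pderiv a e2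
  | .mul e1 e2 =>
      if termB e1 then (pderiv a e1).image (· * e2) ∪ pderiv a e2
      else (pderiv a e1).image (· * e2)
  | .star e => (pderiv a e).image (· * e.star)

/-- The set of action derivatives `A∂(e)`. -/
def AD {A : Type} (e : StExp A) : Set (A × StExp A) := {p | Step e p.1 p.2}

/-- A bisimulation w.r.t. the SOS semantics of star expressions. -/
def IsBisim {A : Type} (B : StExp A → StExp A → Prop) : Prop :=
  ∀ u v, B u v →
    (∀ (a : A) u', Step u a u' → ∃ v', Step v a v' ∧ B u' v') ∧
    (∀ (a : A) v', Step v a v' → ∃ u', Step u a u' ∧ B u' v') ∧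
    (Term u ↔ Term v)

/-- Bisimilarity of the process interpretations of two star expressions. -/
def Bisim {A : Type} (e f : StExp A) : Prop := ∃ B, IsBisim B ∧ B e f

/-! ### 1-charts with entry/body-labelled transitions -/

/-- Data of a (level-labelled) 1-chart: transitions carry an action label in
`A ∪ {1}` (`none` = the empty-step label `1`) and a marking level in `ℕ`
(`0` = body transition, positive = loop-entry transition). -/
structure ChartData (A V : Type) where
  start : V
  tr : V → Option A → ℕ → V → Prop
  term : V → Bool

namespace ChartData

variable {A V : Type}

def anyStep (C : ChartData A V) (x y : V) : Prop := ∃ l n, C.tr x l n y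

def bodyStep (C : ChartData A V) (x y : V) : Prop := ∃ l, C.tr x l 0 y

def oneTr (C : ChartData A V) (x y : V) : Prop := ∃ n, C.tr x none n y

/-- Termination constant of the chart at a vertex. -/
def tau (C : ChartData A V) (v : V) : StExp A := if C.term v then 1 else 0

/-- Weakly guarded: no cycle of 1-transitions. -/
def WeaklyGuarded (C : ChartData A V) : Prop :=
  ∀ v, ¬ Relation.TransGen C.oneTr v v

/-- The entry/body labelling is guarded: loop-entry transitions carry proper labels. -/
def GuardedW (C : ChartData A V) : Prop :=
  ∀ v n w, 0 < n → ¬ C.tr v none n w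

/-- (w1): no cycle of body transitions. -/
def W1 (C : ChartData A V) : Prop :=
  ∀ v, ¬ Relation.TransGen C.bodyStep v v

def AvoidStep (C : ChartData A V) (v x y : V) : Prop := C.anyStep x y ∧ y ≠ v

/-- (w2a): from the target of a loop-entry transition of level `n` at `v`, as long as
`v` is not yet revisited, all transitions taken have level `< n`. -/
def W2a (C : ChartData A V) : Prop :=
  ∀ v n l w, 0 < n → C.tr v l n w → w ≠ v →
    ∀ x, Relation.ReflTransGen (C.AvoidStep v) w x →
      ∀ l' m y, C.tr x l' m y → y ≠ v → m < n

/-- (w2b): every infinite path from the target of a loop-entry transition at `v`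
returns to `v`. -/
def W2b (C : ChartData A V) : Prop :=
  ∀ v n l w, 0 < n → C.tr v l n w →
    ∀ p : ℕ → V, p 0 = w → (∀ i, C.anyStep (p i) (p (i + 1))) → ∃ i, p i = v

/-- The entry/body labelling is a layered LEE-witness. -/
def IsLLEE (C : ChartData A V) : Prop := C.W1 ∧ C.W2a ∧ C.W2b

/-- Body path avoiding the vertex `v`. -/
def BodyAvoid (C : ChartData A V) (v : V) (x y : V) : Prop :=
  Relation.ReflTransGen (fun x y => C.bodyStep x y ∧ y ≠ v) x y

/-- `C.InLoop v w`: `w` is in the body of the loop at `v` (`v ↘ w`, i.e. `w ↘⁻ v`). -/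
def InLoop (C : ChartData A V) (v w : V) : Prop :=
  ∃ n l v', 0 < n ∧ C.tr v l n v' ∧ v' ≠ v ∧ C.BodyAvoid v v' w

end ChartData

/-- An LLEE-witnessed coinductive proof over the system `Mil⁻`-style equational logic
with axioms `ax`, of the equation `e1 = e2`. -/
structure LCoProof (A : Type) (ax : StExp A → StExp A → Prop) (e1 e2 : StExp A) where
  V : Type
  fin : Finite V
  C : ChartData A V
  reach : ∀ v, Relation.ReflTransGen C.anyStep C.start v
  wg : C.WeaklyGuarded
  llee : C.IsLLEE
  L1 : V → StExp A
  L2 : V → StExp A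
  trs : V → List (Option A × V)
  trs_spec : ∀ v p, p ∈ trs v ↔ ∃ n, C.tr v p.1 n p.2
  trs_nodup : ∀ v, (trs v).Nodup
  sol1 : ∀ v, EqDeriv ax (L1 v)
    (C.tau v + listSum ((trs v).map fun p => lab p.1 * L1 p.2))
  sol2 : ∀ v, EqDeriv ax (L2 v)
    (C.tau v + listSum ((trs v).map fun p => lab p.1 * L2 p.2))
  start1 : L1 C.start = e1
  start2 : L2 C.start = e2

/-- The coinductive variant `cMil` of Milner's system: equational logic with the
axioms of `Mil⁻` and the rule scheme `LCP_n`. -/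
inductive CMil {A : Type} : StExp A → StExp A → Prop
  | ax {e f : StExp A} : MilAx e f → CMil e f
  | refl (e : StExp A) : CMil e e
  | symm {e f : StExp A} : CMil e f → CMil f e
  | trans {e f g : StExp A} : CMil e f → CMil f g → CMil e g
  | addCongr {e1 f1 e2 f2 : StExp A} : CMil e1 f1 → CMil e2 f2 → CMil (e1 + e2) (f1 + f2)
  | mulCongr {e1 f1 e2 f2 : StExp A} : CMil e1 f1 → CMil e2 f2 → CMil (e1 * e2) (f1 * f2)
  | starCongr {e f : StExp A} : CMil e f → CMil e.star f.star
  | lcp {e f : StExp A} (Γ : List (StExp A × StExp A)) :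
      (∀ p ∈ Γ, CMil p.1 p.2) →
      Nonempty (LCoProof A (fun x y => MilAx x y ∨ (x, y) ∈ Γ) e f) →
      CMil e f

/-! ### Stacked star expressions and the 1-chart interpretation -/

/-- Star expressions extended with the stacked product `⋆` (constructor `smul`). -/
inductive SExp (A : Type) : Type
  | zero : SExp A
  | one : SExp A
  | act : A → SExp A
  | add : SExp A → SExp A → SExp A
  | mul : SExp A → SExp A → SExp A
  | star : SExp A → SExp A
  | smul : SExp A → SExp A → SExp A
  deriving DecidableEq

/-- Embedding of star expressions into stacked star expressions. -/
def emb {A : Type} : StExp A → SExp A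
  | .zero => .zero
  | .one => .one
  | .act a => .act a
  | .add e f => .add (emb e) (emb f)
  | .mul e f => .mul (emb e) (emb f)
  | .star e => .star (emb e)

/-- The projection `π` replacing stacked products by ordinary products. -/
def proj {A : Type} : SExp A → StExp A
  | .zero => 0
  | .one => 1
  | .act a => StExp.act a
  | .add e f => proj e + proj f
  | .mul e f => proj e * proj f
  | .star e => (proj e).star
  | .smul e f => proj e * proj f

/-- Immediate termination for stacked star expressions (no termination at `⋆`). -/
inductive STerm {A : Type} : SExp A → Prop
  | one : STerm SExp.one
  | addL {e f : SExp A} : STerm e → STerm (SExp.add e f)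
  | addR {e f : SExp A} : STerm f → STerm (SExp.add e f)
  | mul {e f : SExp A} : STerm e → STerm f → STerm (SExp.mul e f)
  | star (e : SExp A) : STerm (SExp.star e)

/-- Boolean immediate-termination test for stacked star expressions. -/
def sTermB {A : Type} : SExp A → Bool
  | .zero => false
  | .one => true
  | .act _ => false
  | .add e f => sTermB e || sTermB f
  | .mul e f => sTermB e && sTermB f
  | .star _ => true
  | .smul _ _ => false

/-- Termination constant of a stacked star expression. -/
def sTau {A : Type} (E : SExp A) : StExp A := if sTermB E then 1 else 0

/-- The TSS of the 1-chart interpretation: transitions between stacked star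
expressions, labelled by `A ∪ {1}` (`none` is the empty-step label `1`). -/
inductive SStep {A : Type} : SExp A → Option A → SExp A → Prop
  | act (a : A) : SStep (SExp.act a) (some a) SExp.one
  | addL {e1 e2 : SExp A} {a : A} {E' : SExp A} :
      SStep e1 (some a) E' → SStep (SExp.add e1 e2) (some a) E'
  | addR {e1 e2 : SExp A} {a : A} {E' : SExp A} :
      SStep e2 (some a) E' → SStep (SExp.add e1 e2) (some a) E'
  | mulL {E1 e2 : SExp A} {l : Option A} {E1' : SExp A} :
      SStep E1 l E1' → SStep (SExp.mul E1 e2) l (SExp.mul E1' e2)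
  | mulR {e1 e2 : SExp A} {a : A} {E2' : SExp A} :
      STerm e1 → SStep e2 (some a) E2' → SStep (SExp.mul e1 e2) (some a) E2'
  | star {e : SExp A} {a : A} {E' : SExp A} :
      SStep e (some a) E' → SStep (SExp.star e) (some a) (SExp.smul E' (SExp.star e))
  | smulL {E1 f : SExp A} {l : Option A} {E1' : SExp A} :
      SStep E1 l E1' → SStep (SExp.smul E1 f) l (SExp.smul E1' f)
  | smulT {E1 f : SExp A} : STerm E1 → SStep (SExp.smul E1 f) none f

/-- One transition step (any label) between stacked star expressions. -/
def sR {A : Type} (X Y : SExp A) : Prop := ∃ l, SStep X l Y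

end RegEx
namespace RegEx
section Aux
variable {A : Type}

lemma term_mul_iff {x y : StExp A} : Term (x * y) ↔ Term x ∧ Term y := by
  constructor
  · intro h; cases h with | mul h1 h2 => exact ⟨h1, h2⟩
  · rintro ⟨h1, h2⟩; exact Term.mul h1 h2

lemma term_add_iff {x y : StExp A} : Term (x + y) ↔ Term x ∨ Term y := by
  constructor
  · intro h; cases h with
    | addL h => exact Or.inl h
    | addR h => exact Or.inr h
  · rintro (h | h); exacts [Term.addL h, Term.addR h]

lemma step_mul_iff {x y : StExp A} {a : A} {p : StExp A} :
    Step (x * y) a p ↔ (∃ x', Step x a x' ∧ p = x' * y) ∨ (Term x ∧ Step y a p) := by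
  constructor
  · intro h; cases h with
    | mulL h => exact Or.inl ⟨_, h, rfl⟩
    | mulR h1 h2 => exact Or.inr ⟨h1, h2⟩
  · rintro (⟨x', h, rfl⟩ | ⟨h1, h2⟩); exacts [Step.mulL h, Step.mulR h1 h2]

lemma step_add_iff {x y : StExp A} {a : A} {p : StExp A} :
    Step (x + y) a p ↔ Step x a p ∨ Step y a p := by
  constructor
  · intro h; cases h with
    | addL h => exact Or.inl h
    | addR h => exact Or.inr h
  · rintro (h | h); exacts [Step.addL h, Step.addR h]

lemma step_star_iff {x : StExp A} {a : A} {p : StExp A} :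
    Step x.star a p ↔ ∃ x', Step x a x' ∧ p = x' * x.star := by
  constructor
  · intro h; cases h with | star h => exact ⟨_, h, rfl⟩
  · rintro ⟨x', h, rfl⟩; exact Step.star h

lemma no_step_one {a : A} {p : StExp A} : ¬ Step (1 : StExp A) a p := by
  intro h; cases h

lemma term_one : Term (1 : StExp A) := Term.one

lemma isBisim_bisim : IsBisim (Bisim : StExp A → StExp A → Prop) := by
  intro u v ⟨B, hB, huv⟩
  obtain ⟨h1, h2, h3⟩ := hB u v huv
  refine ⟨?_, ?_, h3⟩
  · intro a u' hs; obtain ⟨v', hv', hb⟩ := h1 a u' hs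
    exact ⟨v', hv', B, hB, hb⟩
  · intro a v' hs; obtain ⟨u', hu', hb⟩ := h2 a v' hs
    exact ⟨u', hu', B, hB, hb⟩

lemma bisim_refl (x : StExp A) : Bisim x x :=
  ⟨Eq, by rintro u v rfl; exact ⟨fun a u' h => ⟨u', h, rfl⟩, fun a v' h => ⟨v', h, rfl⟩, Iff.rfl⟩, rfl⟩

lemma bisim_symm {x y : StExp A} (h : Bisim x y) : Bisim y x := by
  obtain ⟨B, hB, hxy⟩ := h
  refine ⟨fun u v => B v u, ?_, hxy⟩
  intro u v hvu
  obtain ⟨h1, h2, h3⟩ := hB v u hvu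
  exact ⟨h2, h1, h3.symm⟩

lemma bisim_trans {x y z : StExp A} (h1 : Bisim x y) (h2 : Bisim y z) : Bisim x z := by
  refine ⟨fun u w => ∃ v, Bisim u v ∧ Bisim v w, ?_, y, h1, h2⟩
  rintro u w ⟨v, huv, hvw⟩
  obtain ⟨f1, b1, t1⟩ := isBisim_bisim u v huv
  obtain ⟨f2, b2, t2⟩ := isBisim_bisim v w hvw
  refine ⟨?_, ?_, t1.trans t2⟩
  · intro a u' hs
    obtain ⟨v', hv', hb1⟩ := f1 a u' hs
    obtain ⟨w', hw', hb2⟩ := f2 a v' hv'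
    exact ⟨w', hw', v', hb1, hb2⟩
  · intro a w' hs
    obtain ⟨v', hv', hb2⟩ := b2 a w' hs
    obtain ⟨u', hu', hb1⟩ := b1 a v' hv'
    exact ⟨u', hu', v', hb1, hb2⟩

lemma bisim_oneMul (x : StExp A) : Bisim (1 * x) x := by
  refine ⟨fun p q => p = 1 * q ∨ p = q, ?_, Or.inl rfl⟩
  rintro p q (rfl | rfl)
  · refine ⟨?_, ?_, ?_⟩
    · intro a p' hs
      rcases step_mul_iff.mp hs with ⟨x', hx', _⟩ | ⟨_, hq⟩
      · exact absurd hx' no_step_one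
      · exact ⟨p', hq, Or.inr rfl⟩
    · intro a q' hs
      exact ⟨q', Step.mulR Term.one hs, Or.inr rfl⟩
    · rw [term_mul_iff]; exact ⟨fun h => h.2, fun h => ⟨Term.one, h⟩⟩
  · exact ⟨fun a p' h => ⟨p', h, Or.inr rfl⟩, fun a q' h => ⟨q', h, Or.inr rfl⟩, Iff.rfl⟩

lemma bisim_assoc (x y z : StExp A) : Bisim ((x * y) * z) (x * (y * z)) := by
  refine ⟨fun p q => (∃ x y z : StExp A, p = (x * y) * z ∧ q = x * (y * z)) ∨ p = q,
    ?_, Or.inl ⟨x, y, z, rfl, rfl⟩⟩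
  rintro p q (⟨x, y, z, rfl, rfl⟩ | rfl)
  · refine ⟨?_, ?_, ?_⟩
    · intro a p' hs
      rcases step_mul_iff.mp hs with ⟨w, hw, rfl⟩ | ⟨ht, hz⟩
      · rcases step_mul_iff.mp hw with ⟨x', hx', rfl⟩ | ⟨htx, hy⟩
        · exact ⟨x' * (y * z), Step.mulL hx', Or.inl ⟨x', y, z, rfl, rfl⟩⟩
        · exact ⟨w * z, Step.mulR htx (Step.mulL hy), Or.inr rfl⟩
      · rw [term_mul_iff] at ht
        exact ⟨p', Step.mulR ht.1 (Step.mulR ht.2 hz), Or.inr rfl⟩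
    · intro a q' hs
      rcases step_mul_iff.mp hs with ⟨x', hx', rfl⟩ | ⟨htx, hyz⟩
      · exact ⟨(x' * y) * z, Step.mulL (Step.mulL hx'), Or.inl ⟨x', y, z, rfl, rfl⟩⟩
      · rcases step_mul_iff.mp hyz with ⟨y', hy', rfl⟩ | ⟨hty, hz⟩
        · exact ⟨(y' * z), Step.mulL (Step.mulR htx hy'), Or.inr rfl⟩
        · exact ⟨q', Step.mulR (Term.mul htx hty) hz, Or.inr rfl⟩
    · simp only [term_mul_iff]; tauto
  · exact ⟨fun a p' h => ⟨p', h, Or.inr rfl⟩, fun a q' h => ⟨q', h, Or.inr rfl⟩, Iff.rfl⟩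

end Aux
end RegEx

open RegEx in
/-- the fixed-point rule RSP* is sound for bisimilarity. -/
theorem stmt_8 {A : Type} (e f g : StExp A) (hf : ¬ Term f)
    (h : Bisim e (f * e + g)) : Bisim e (f.star * g) := by
  have hT : Term e ↔ Term g := by
    have ht := (isBisim_bisim e (f * e + g) h).2.2
    rw [term_add_iff, term_mul_iff] at ht
    tauto
  obtain ⟨fe, be, te⟩ := isBisim_bisim e (f * e + g) h
  refine ⟨fun u w => Bisim u w ∨ ∃ v, Bisim u (v * e) ∧ Bisim w (v * (f.star * g)),
    ?_, Or.inr ⟨1, bisim_symm (bisim_oneMul e), bisim_symm (bisim_oneMul (f.star * g))⟩⟩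
  rintro u w (hb | ⟨v, hu, hw⟩)
  · obtain ⟨h1, h2, h3⟩ := isBisim_bisim u w hb
    refine ⟨?_, ?_, h3⟩
    · intro a u' hs; obtain ⟨w', hw', hb'⟩ := h1 a u' hs
      exact ⟨w', hw', Or.inl hb'⟩
    · intro a w' hs; obtain ⟨u', hu', hb'⟩ := h2 a w' hs
      exact ⟨u', hu', Or.inl hb'⟩
  · obtain ⟨fu, bu, tu⟩ := isBisim_bisim u (v * e) hu
    obtain ⟨fw, bw, tw⟩ := isBisim_bisim w (v * (f.star * g)) hw
    refine ⟨?_, ?_, ?_⟩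
    · -- forward
      intro a u' hs
      obtain ⟨p, hp, hbp⟩ := fu a u' hs
      rcases step_mul_iff.mp hp with ⟨v', hv', rfl⟩ | ⟨htv, he⟩
      · obtain ⟨w', hw', hbw'⟩ := bw a (v' * (f.star * g)) (Step.mulL hv')
        exact ⟨w', hw', Or.inr ⟨v', hbp, hbw'⟩⟩
      · obtain ⟨q, hq, hbq⟩ := fe a p he
        rcases step_add_iff.mp hq with hfe | hg
        · rcases step_mul_iff.mp hfe with ⟨f', hf', rfl⟩ | ⟨htf, _⟩
          · obtain ⟨w', hw', hbw'⟩ := bw a ((f' * f.star) * g)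
              (Step.mulR htv (Step.mulL (Step.star hf')))
            exact ⟨w', hw', Or.inr ⟨f', bisim_trans hbp hbq,
              bisim_trans hbw' (bisim_assoc f' f.star g)⟩⟩
          · exact absurd htf hf
        · obtain ⟨w', hw', hbw'⟩ := bw a q (Step.mulR htv (Step.mulR (Term.star f) hg))
          exact ⟨w', hw', Or.inl (bisim_trans hbp (bisim_trans hbq (bisim_symm hbw')))⟩
    · -- backward
      intro a w' hs
      obtain ⟨t, ht, hbw'⟩ := fw a w' hs
      rcases step_mul_iff.mp ht with ⟨v', hv', rfl⟩ | ⟨htv, hst⟩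
      · obtain ⟨u', hu', hbu'⟩ := bu a (v' * e) (Step.mulL hv')
        exact ⟨u', hu', Or.inr ⟨v', hbu', hbw'⟩⟩
      · rcases step_mul_iff.mp hst with ⟨s, hsstar, rfl⟩ | ⟨_, hg⟩
        · obtain ⟨f', hf', rfl⟩ := step_star_iff.mp hsstar
          obtain ⟨e'', he'', hbe''⟩ := be a (f' * e) (Step.addL (Step.mulL hf'))
          obtain ⟨u', hu', hbu'⟩ := bu a e'' (Step.mulR htv he'')
          exact ⟨u', hu', Or.inr ⟨f', bisim_trans hbu' hbe'',
            bisim_trans hbw' (bisim_assoc f' f.star g)⟩⟩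
        · obtain ⟨e'', he'', hbe''⟩ := be a t (Step.addR hg)
          obtain ⟨u', hu', hbu'⟩ := bu a e'' (Step.mulR htv he'')
          exact ⟨u', hu', Or.inl (bisim_trans hbu'
            (bisim_trans hbe'' (bisim_symm hbw')))⟩
    · -- termination
      rw [tu, tw, term_mul_iff, term_mul_iff, term_mul_iff, hT]
      have : Term (StExp.star f) := Term.star f
      tauto
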